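/- Let (U,V) be a pair of nonnegative random variables such that P(U ≤ t) ≤ t for all t ∈ [0,1], and assume that for every r ≥ 0 the map u ↦ P(V < r | U ≤ u) is nondecreasing on {u : P(U ≤ u) > 0}. Then for every c > 0, E[ 1{U ≤ c·V} / V · 1{V > 0} ] ≤ c. -/

import Mathlib

/-!
Slice the event `{U ≤ c V}` along the geometric grid `c V ∈ [ρ^k, ρ^(k+1))`, `k ∈ ℤ`, on whose
`k`-th cell `1 / V ≤ c / ρ^k`. Put `b k = P(V < ρ^k / c | U ≤ ρ^k)`. The `k`-th cell lies in
`{V < ρ^(k+1)/c, U ≤ ρ^(k+1)}` but misses `{V < ρ^k/c, U ≤ ρ^(k+1)}`, and positive dependence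
bounds the probability of the latter from below by `P(U ≤ ρ^(k+1)) b k`. Hence the cell has
probability at most `P(U ≤ ρ^(k+1)) (b (k+1) - b k) ≤ ρ^(k+1) (b (k+1) - b k)`, so the expectation
is at most `c ρ ∑ₖ (b (k+1) - b k) ≤ c ρ`, the sequence `b` being nondecreasing with values in
`[0, 1]`. Finally let `ρ ↓ 1`.
-/

open MeasureTheory
open scoped ENNReal

/-- `Finset.sum_range_tsub` assumes `AddLeftReflectLE`, which `ℝ≥0∞` lacks. -/
theorem sum_range_tsub_of_monotone {M : Type*} [AddCommMonoid M] [PartialOrder M]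
    [CanonicallyOrderedAdd M] [Sub M] [OrderedSub M] {f : ℕ → M} (hf : Monotone f)
    (n : ℕ) : ∑ i ∈ Finset.range n, (f (i + 1) - f i) = f n - f 0 := by
  induction n with
  | zero => simp
  | succ n ih =>
    rw [Finset.sum_range_succ, ih, add_comm, tsub_add_tsub_cancel (hf n.le_succ) (hf n.zero_le)]

theorem ENNReal.tsum_succ_sub_le_of_monotone {b : ℤ → ℝ≥0∞} {C : ℝ≥0∞} (hb : Monotone b)
    (hC : ∀ k, b k ≤ C) : ∑' k, (b (k + 1) - b k) ≤ C := by
  rw [ENNReal.tsum_eq_iSup_sum]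
  refine iSup_le fun s => ?_
  set N : ℕ := s.sup Int.natAbs
  set shift : ℕ → ℤ := fun i => i - N
  have hs : s ⊆ (Finset.range (2 * N + 1)).image shift := by
    intro k hk
    have hkN := Finset.le_sup (f := Int.natAbs) hk
    simp only [Finset.mem_image, Finset.mem_range, shift]
    exact ⟨(k + N).toNat, by omega, by omega⟩
  have hshift : Monotone shift := fun i j h => by simp only [shift]; omega
  calc ∑ k ∈ s, (b (k + 1) - b k)
      ≤ ∑ k ∈ (Finset.range (2 * N + 1)).image shift, (b (k + 1) - b k) :=
        Finset.sum_le_sum_of_subset hs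
    _ = ∑ i ∈ Finset.range (2 * N + 1), (b (shift (i + 1)) - b (shift i)) := by
        rw [Finset.sum_image fun i _ j _ h => by simpa [shift] using h]
        simp only [shift, Nat.cast_succ, sub_add_eq_add_sub]
    _ = b (shift (2 * N + 1)) - b (shift 0) := sum_range_tsub_of_monotone (hb.comp hshift) _
    _ ≤ C := tsub_le_self.trans (hC _)

section PositiveDependence

variable {Ω : Type*}

theorem ofReal_inv_le_tsum_indicator {U V : Ω → ℝ} {c ρ : ℝ} (hc : 0 < c) (hρ : 1 < ρ)
    (ω : Ω) :
    ENNReal.ofReal (if U ω ≤ c * V ω ∧ 0 < V ω then (V ω)⁻¹ else 0)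
      ≤ ∑' k : ℤ, {ω | U ω ≤ c * V ω ∧ ρ ^ k ≤ c * V ω ∧ c * V ω < ρ ^ (k + 1)}.indicator
          (fun _ => ENNReal.ofReal (c / ρ ^ k)) ω := by
  split_ifs with h
  · obtain ⟨k, hk_le, hk_lt⟩ := exists_mem_Ico_zpow (mul_pos hc h.2) hρ
    refine le_trans ?_ (ENNReal.le_tsum k)
    rw [Set.indicator_of_mem (by exact ⟨h.1, hk_le, hk_lt⟩)]
    refine ENNReal.ofReal_le_ofReal ?_
    calc (V ω)⁻¹ = c / (c * V ω) := by field_simp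
      _ ≤ c / ρ ^ k := div_le_div_of_nonneg_left hc.le (zpow_pos (by linarith) k) hk_le
  · simp

variable [MeasurableSpace Ω] (P : Measure Ω) (U V : Ω → ℝ)

/-- `P(V < r | U ≤ u)`, equal to `0` when `P(U ≤ u) = 0`. -/
noncomputable def condProb (r u : ℝ) : ℝ≥0∞ :=
  P {ω | V ω < r ∧ U ω ≤ u} / P {ω | U ω ≤ u}

variable {P U V}

theorem measure_lt_le_eq_mul_condProb [IsFiniteMeasure P] (r u : ℝ) :
    P {ω | V ω < r ∧ U ω ≤ u} = P {ω | U ω ≤ u} * condProb P U V r u := by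
  rcases eq_or_ne (P {ω | U ω ≤ u}) 0 with h0 | h0
  · rw [h0, zero_mul]
    exact measure_mono_null (fun ω hω => hω.2) h0
  · exact (ENNReal.mul_div_cancel h0 (measure_ne_top _ _)).symm

theorem condProb_mono_left (u : ℝ) : Monotone fun r => condProb P U V r u := by
  intro r r' hr
  refine ENNReal.div_le_div_right (measure_mono ?_) _
  exact fun ω hω => ⟨hω.1.trans_le hr, hω.2⟩

theorem condProb_mono_right
    (hdep : ∀ r : ℝ, 0 ≤ r → ∀ u u' : ℝ, u ≤ u' → 0 < P {ω | U ω ≤ u} →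
      P {ω | V ω < r ∧ U ω ≤ u} / P {ω | U ω ≤ u}
        ≤ P {ω | V ω < r ∧ U ω ≤ u'} / P {ω | U ω ≤ u'})
    {r : ℝ} (hr : 0 ≤ r) : Monotone (condProb P U V r) := by
  intro u u' hu
  rcases eq_zero_or_pos (P {ω | U ω ≤ u}) with h0 | hpos
  · have hnum : P {ω | V ω < r ∧ U ω ≤ u} = 0 := measure_mono_null (fun ω hω => hω.2) h0
    simp [condProb, hnum]
  · exact hdep r hr u u' hu hpos

theorem condProb_le_one (r u : ℝ) : condProb P U V r u ≤ 1 :=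
  ENNReal.div_le_of_le_mul (by rw [one_mul]; exact measure_mono fun _ hω => hω.2)

theorem condProb_diag_mono
    (hmono : ∀ r, 0 ≤ r → Monotone (condProb P U V r))
    {c t t' : ℝ} (hc : 0 < c) (ht : 0 ≤ t) (htt' : t ≤ t') :
    condProb P U V (t / c) t ≤ condProb P U V (t' / c) t' :=
  (hmono _ (div_nonneg ht hc.le) htt').trans
    (condProb_mono_left t' (div_le_div_of_nonneg_right htt' hc.le))

/-- Positive dependence enters by lowering the conditioning level `U ≤ t'` to `U ≤ t` in the
probability of `{V < t / c, U ≤ t'}`, which the cell misses. -/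
theorem measure_cell_le_mul_condProb_sub [IsFiniteMeasure P] (hU : Measurable U) (hV : Measurable V)
    (hmono : ∀ r, 0 ≤ r → Monotone (condProb P U V r))
    {c t t' : ℝ} (hc : 0 < c) (ht : 0 ≤ t) (htt' : t ≤ t') :
    P {ω | U ω ≤ c * V ω ∧ t ≤ c * V ω ∧ c * V ω < t'}
      ≤ P {ω | U ω ≤ t'} * (condProb P U V (t' / c) t' - condProb P U V (t / c) t) := by
  set A := {ω | U ω ≤ c * V ω ∧ t ≤ c * V ω ∧ c * V ω < t'}
  set D := {ω | V ω < t / c ∧ U ω ≤ t'}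
  have hD : MeasurableSet D :=
    (measurableSet_lt hV measurable_const).inter (measurableSet_le hU measurable_const)
  have hdisj : Disjoint A D := Set.disjoint_left.2 fun ω hA hD =>
    hA.2.1.not_gt ((lt_div_iff₀' hc).1 hD.1)
  have hunion : A ∪ D ⊆ {ω | V ω < t' / c ∧ U ω ≤ t'} := by
    rintro ω (⟨hUV, -, hVt'⟩ | ⟨hVt, hUt'⟩)
    · exact ⟨(lt_div_iff₀' hc).2 hVt', hUV.trans hVt'.le⟩
    · exact ⟨hVt.trans_le (div_le_div_of_nonneg_right htt' hc.le), hUt'⟩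
  have hsum : P A + P {ω | U ω ≤ t'} * condProb P U V (t / c) t
      ≤ P {ω | U ω ≤ t'} * condProb P U V (t' / c) t' :=
    calc P A + P {ω | U ω ≤ t'} * condProb P U V (t / c) t
        ≤ P A + P D := by
          rw [measure_lt_le_eq_mul_condProb]
          gcongr
          exact hmono _ (div_nonneg ht hc.le) htt'
      _ = P (A ∪ D) := (measure_union hdisj hD).symm
      _ ≤ _ := by rw [← measure_lt_le_eq_mul_condProb]; exact measure_mono hunion
  rw [ENNReal.mul_sub fun _ _ => measure_ne_top _ _]
  exact ENNReal.le_sub_of_add_le_right (ENNReal.mul_ne_top (measure_ne_top _ _)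
    ((condProb_le_one _ _).trans_lt ENNReal.one_lt_top).ne) hsum

theorem measure_setOf_le_le_ofReal [IsProbabilityMeasure P]
    (hUnif : ∀ t : ℝ, t ∈ Set.Icc (0:ℝ) 1 → P {ω | U ω ≤ t} ≤ ENNReal.ofReal t)
    {t : ℝ} (ht : 0 ≤ t) : P {ω | U ω ≤ t} ≤ ENNReal.ofReal t := by
  rcases le_total t 1 with ht1 | ht1
  · exact hUnif t ⟨ht, ht1⟩
  · exact prob_le_one.trans (ENNReal.one_le_ofReal.2 ht1)

theorem lintegral_le_mul_of_one_lt [IsProbabilityMeasure P] (hU : Measurable U)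
    (hV : Measurable V)
    (hUnif : ∀ t : ℝ, t ∈ Set.Icc (0:ℝ) 1 → P {ω | U ω ≤ t} ≤ ENNReal.ofReal t)
    (hmono : ∀ r, 0 ≤ r → Monotone (condProb P U V r))
    {c ρ : ℝ} (hc : 0 < c) (hρ : 1 < ρ) :
    ∫⁻ ω, ENNReal.ofReal (if U ω ≤ c * V ω ∧ 0 < V ω then (V ω)⁻¹ else 0) ∂P
      ≤ ENNReal.ofReal (c * ρ) := by
  set A : ℤ → Set Ω := fun k => {ω | U ω ≤ c * V ω ∧ ρ ^ k ≤ c * V ω ∧ c * V ω < ρ ^ (k + 1)}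
  set b : ℤ → ℝ≥0∞ := fun k => condProb P U V (ρ ^ k / c) (ρ ^ k)
  have hρ0 : 0 < ρ := zero_lt_one.trans hρ
  have hA : ∀ k, MeasurableSet (A k) := fun k =>
    (measurableSet_le hU (hV.const_mul c)).inter ((measurableSet_le measurable_const
      (hV.const_mul c)).inter (measurableSet_lt (hV.const_mul c) measurable_const))
  have hb : Monotone b := fun k l hkl =>
    condProb_diag_mono hmono hc (zpow_pos hρ0 k).le (zpow_le_zpow_right₀ hρ.le hkl)
  have hcell : ∀ k : ℤ, ENNReal.ofReal (c / ρ ^ k) * P (A k)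
      ≤ ENNReal.ofReal (c * ρ) * (b (k + 1) - b k) := fun k =>
    calc ENNReal.ofReal (c / ρ ^ k) * P (A k)
        ≤ ENNReal.ofReal (c / ρ ^ k) * (P {ω | U ω ≤ ρ ^ (k + 1)} * (b (k + 1) - b k)) := by
          gcongr
          exact measure_cell_le_mul_condProb_sub hU hV hmono hc (zpow_pos hρ0 k).le
            (zpow_le_zpow_right₀ hρ.le (Int.le_add_one le_rfl))
      _ ≤ ENNReal.ofReal (c / ρ ^ k) * (ENNReal.ofReal (ρ ^ (k + 1)) * (b (k + 1) - b k)) := by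
          gcongr
          exact measure_setOf_le_le_ofReal hUnif (zpow_pos hρ0 _).le
      _ = ENNReal.ofReal (c * ρ) * (b (k + 1) - b k) := by
          rw [← mul_assoc, ← ENNReal.ofReal_mul (by positivity), zpow_add_one₀ hρ0.ne']
          congr 2
          field_simp
  calc ∫⁻ ω, ENNReal.ofReal (if U ω ≤ c * V ω ∧ 0 < V ω then (V ω)⁻¹ else 0) ∂P
      ≤ ∫⁻ ω, ∑' k, (A k).indicator (fun _ => ENNReal.ofReal (c / ρ ^ k)) ω ∂P :=
        lintegral_mono (ofReal_inv_le_tsum_indicator hc hρ)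
    _ = ∑' k, ENNReal.ofReal (c / ρ ^ k) * P (A k) := by
        rw [lintegral_tsum fun k => (measurable_const.indicator (hA k)).aemeasurable]
        exact tsum_congr fun k => lintegral_indicator_const (hA k) _
    _ ≤ ∑' k, ENNReal.ofReal (c * ρ) * (b (k + 1) - b k) := ENNReal.tsum_le_tsum hcell
    _ = ENNReal.ofReal (c * ρ) * ∑' k, (b (k + 1) - b k) := ENNReal.tsum_mul_left
    _ ≤ ENNReal.ofReal (c * ρ) := mul_le_of_le_one_right'
        (ENNReal.tsum_succ_sub_le_of_monotone hb fun _ => condProb_le_one _ _)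

end PositiveDependence

theorem dependence_control_linear_general
    {Ω : Type*} [MeasurableSpace Ω] (P : Measure Ω) [IsProbabilityMeasure P]
    (U V : Ω → ℝ) (hU : Measurable U) (hV : Measurable V)
    (hUnif : ∀ t : ℝ, t ∈ Set.Icc (0:ℝ) 1 → P {ω | U ω ≤ t} ≤ ENNReal.ofReal t)
    (hdep : ∀ r : ℝ, 0 ≤ r → ∀ u u' : ℝ, u ≤ u' → 0 < P {ω | U ω ≤ u} →
      P {ω | V ω < r ∧ U ω ≤ u} / P {ω | U ω ≤ u}
        ≤ P {ω | V ω < r ∧ U ω ≤ u'} / P {ω | U ω ≤ u'}) :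
    ∀ c : ℝ, 0 < c →
      ∫ ω, (if U ω ≤ c * V ω ∧ 0 < V ω then (V ω)⁻¹ else 0) ∂P ≤ c := by
  intro c hc
  have hf_nonneg : 0 ≤ᵐ[P] fun ω => if U ω ≤ c * V ω ∧ 0 < V ω then (V ω)⁻¹ else 0 :=
    Filter.Eventually.of_forall fun ω => by
      simp only [Pi.zero_apply]
      split_ifs with h
      exacts [inv_nonneg.2 h.2.le, le_rfl]
  have hf_meas : Measurable fun ω => if U ω ≤ c * V ω ∧ 0 < V ω then (V ω)⁻¹ else 0 :=
    Measurable.ite ((measurableSet_le hU (hV.const_mul c)).inter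
      (measurableSet_lt measurable_const hV)) hV.inv measurable_const
  rw [integral_eq_lintegral_of_nonneg_ae hf_nonneg hf_meas.aestronglyMeasurable]
  refine le_of_forall_gt_imp_ge_of_dense fun a ha => ENNReal.toReal_le_of_le_ofReal ?_ ?_
  · exact hc.le.trans ha.le
  · simpa [mul_div_cancel₀ a hc.ne'] using lintegral_le_mul_of_one_lt hU hV hUnif
      (fun _ => condProb_mono_right hdep) hc ((one_lt_div hc).2 ha)

/-- Dependence control condition with the linear shape function `β(x) = x`, under the
positive dependence condition that `u ↦ P(V < r | U ≤ u)` is nondecreasing for each `r ≥ 0`. -/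
theorem dependence_control_linear
    {Ω : Type*} [MeasurableSpace Ω] (P : Measure Ω) [IsProbabilityMeasure P]
    (U V : Ω → ℝ) (hU : Measurable U) (hV : Measurable V)
    (hUpos : ∀ ω, 0 ≤ U ω) (hVpos : ∀ ω, 0 ≤ V ω)
    (hUnif : ∀ t : ℝ, t ∈ Set.Icc (0:ℝ) 1 → P {ω | U ω ≤ t} ≤ ENNReal.ofReal t)
    (hdep : ∀ r : ℝ, 0 ≤ r → ∀ u u' : ℝ, u ≤ u' → 0 < P {ω | U ω ≤ u} →
      P {ω | V ω < r ∧ U ω ≤ u} / P {ω | U ω ≤ u}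
        ≤ P {ω | V ω < r ∧ U ω ≤ u'} / P {ω | U ω ≤ u'}) :
    ∀ c : ℝ, 0 < c →
      ∫ ω, (if U ω ≤ c * V ω ∧ 0 < V ω then (V ω)⁻¹ else 0) ∂P ≤ c :=
  dependence_control_linear_general P U V hU hV hUnif hdep
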